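/- Let (x, z) be an AF_ca-feasible solution for a CBPP instance in which all variables x_a (a ∈ A) and z are nonnegative integers. Then there exist finitely many pairs (d_1, P_1), …, (d_t, P_t), where each P_s is a path in the AF_ca graph from vertex 0 to vertex L using only arcs in A and in which no two consecutive arcs have the same color (a color-alternating path), and each d_s is a positive integer, such that d_1 + ⋯ + d_t = z and, for every arc a ∈ A, the sum of d_s over all s such that P_s uses arc a equals x_a. -/

import Mathlib

open scoped Classical

/-- An instance of the Colored Bin Packing Problem: bin capacity `L > 0`, `Q ≥ 2` colors,
items `Fin n` each with a length in `(0, L]`, a positive demand and a color in `{1, …, Q}`. -/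
structure CBPP where
  L : ℕ
  Q : ℕ
  hL : 0 < L
  hQ : 2 ≤ Q
  n : ℕ
  len : Fin n → ℕ
  hlenPos : ∀ u, 0 < len u
  hlenLe : ∀ u, len u ≤ L
  dem : Fin n → ℕ
  hdemPos : ∀ u, 0 < dem u
  col : Fin n → ℕ
  hcol : ∀ u, col u ∈ Finset.Icc 1 Q

namespace CBPP

variable (P : CBPP)

/-- Item arc `(i, j, q)` of the AF_ca graph: `0 ≤ i < j ≤ L`, color `q ∈ {1,…,Q}`, and there
is an item of length `j − i` and color `q`. -/
def IsItemArc (a : ℕ × ℕ × ℕ) : Prop :=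
  a.1 < a.2.1 ∧ a.2.1 ≤ P.L ∧ a.2.2 ∈ Finset.Icc 1 P.Q ∧
    ∃ u : Fin P.n, P.len u = a.2.1 - a.1 ∧ P.col u = a.2.2

/-- Loss arc `(i, L, Q+1)` of the AF_ca graph, for `1 ≤ i ≤ L − 1`. -/
def IsLossArc (a : ℕ × ℕ × ℕ) : Prop :=
  a.2.2 = P.Q + 1 ∧ a.2.1 = P.L ∧ 1 ≤ a.1 ∧ a.1 ≤ P.L - 1

def IsArc (a : ℕ × ℕ × ℕ) : Prop := P.IsItemArc a ∨ P.IsLossArc a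

/-- The (finite) arc set `A` of the AF_ca graph. -/
noncomputable def arcs : Finset (ℕ × ℕ × ℕ) :=
  (Finset.range (P.L + 1) ×ˢ Finset.range (P.L + 1) ×ˢ Finset.range (P.Q + 2)).filter
    (fun a => P.IsArc a)

/-- Total flow on arcs entering vertex `j`. -/
noncomputable def inflow (x : ℕ × ℕ × ℕ → ℝ) (j : ℕ) : ℝ :=
  ∑ a ∈ P.arcs.filter (fun a => a.2.1 = j), x a

/-- Total flow on arcs leaving vertex `j`. -/
noncomputable def outflow (x : ℕ × ℕ × ℕ → ℝ) (j : ℕ) : ℝ :=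
  ∑ a ∈ P.arcs.filter (fun a => a.1 = j), x a

/-- Total flow on arcs of color `q` entering vertex `j`. -/
noncomputable def inflowC (x : ℕ × ℕ × ℕ → ℝ) (j q : ℕ) : ℝ :=
  ∑ a ∈ P.arcs.filter (fun a => a.2.1 = j ∧ a.2.2 = q), x a

/-- Total flow on arcs of colors in `{1,…,Q+1} \ {q}` leaving vertex `j`. -/
noncomputable def outflowNotC (x : ℕ × ℕ × ℕ → ℝ) (j q : ℕ) : ℝ :=
  ∑ a ∈ P.arcs.filter (fun a => a.1 = j ∧ a.2.2 ≠ q), x a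

/-- AF_ca-feasibility of a nonnegative real solution `(x, z)`. -/
structure AFcaFeasible (x : ℕ × ℕ × ℕ → ℝ) (z : ℝ) : Prop where
  nonneg : ∀ a ∈ P.arcs, 0 ≤ x a
  znonneg : 0 ≤ z
  flow_source : P.inflow x 0 - P.outflow x 0 = -z
  flow_mid : ∀ j, 1 ≤ j → j ≤ P.L - 1 → P.inflow x j - P.outflow x j = 0
  flow_sink : P.inflow x P.L - P.outflow x P.L = z
  color_alt : ∀ j, 1 ≤ j → j ≤ P.L - 1 → ∀ q ∈ Finset.Icc 1 P.Q,
    P.inflowC x j q ≤ P.outflowNotC x j q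
  demand : ∀ u : Fin P.n,
    (∑ a ∈ P.arcs.filter (fun a => a.2.1 = a.1 + P.len u ∧ a.2.2 = P.col u), x a) = P.dem u

end CBPP

namespace CBPP

variable (P : CBPP)

/-- A color-alternating path from vertex `0` to vertex `L` in the AF_ca graph: a nonempty
list of arcs of `A`, starting at `0`, ending at `L`, consecutive arcs sharing endpoints and
having different colors. -/
def IsCAPath (p : List (ℕ × ℕ × ℕ)) : Prop :=
  p ≠ [] ∧ (∀ a ∈ p, a ∈ P.arcs) ∧
    p.headI.1 = 0 ∧ p.getLastI.2.1 = P.L ∧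
    List.Chain' (fun a b => a.2.1 = b.1 ∧ a.2.2 ≠ b.2.2) p

end CBPP


namespace CBPP

/-- Total flow on arcs of color `q` leaving vertex `j`. -/
noncomputable def outflowC (P : CBPP) (x : ℕ × ℕ × ℕ → ℝ) (j q : ℕ) : ℝ :=
  ∑ a ∈ P.arcs.filter (fun a => a.1 = j ∧ a.2.2 = q), x a

variable {P : CBPP}

lemma arc_isArc {a : ℕ × ℕ × ℕ} (ha : a ∈ P.arcs) : P.IsArc a :=
  (Finset.mem_filter.1 ha).2

lemma arc_lt {a : ℕ × ℕ × ℕ} (ha : a ∈ P.arcs) : a.1 < a.2.1 := by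
  rcases arc_isArc ha with h | h
  · exact h.1
  · obtain ⟨-, h2, h3, h4⟩ := h; have := P.hL; omega

lemma arc_le {a : ℕ × ℕ × ℕ} (ha : a ∈ P.arcs) : a.2.1 ≤ P.L := by
  rcases arc_isArc ha with h | h
  · exact h.2.1
  · obtain ⟨-, h2, -, -⟩ := h; omega

lemma arc_col_mem {a : ℕ × ℕ × ℕ} (ha : a ∈ P.arcs) (h : a.2.1 < P.L) :
    a.2.2 ∈ Finset.Icc 1 P.Q := by
  rcases arc_isArc ha with h' | h'
  · exact h'.2.2.1
  · obtain ⟨-, h2, -, -⟩ := h'; omega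

lemma arc_col_le {a : ℕ × ℕ × ℕ} (ha : a ∈ P.arcs) :
    a.2.2 ∈ Finset.Icc 1 (P.Q + 1) := by
  rcases arc_isArc ha with h' | h'
  · have := Finset.mem_Icc.1 h'.2.2.1
    exact Finset.mem_Icc.2 ⟨this.1, by omega⟩
  · obtain ⟨h1, -, -, -⟩ := h'
    exact Finset.mem_Icc.2 ⟨by omega, by omega⟩

variable {x : ℕ × ℕ × ℕ → ℝ} {z : ℝ}

lemma inflow_zero : P.inflow x 0 = 0 := by
  apply Finset.sum_eq_zero
  intro a ha
  rw [Finset.mem_filter] at ha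
  exact absurd (arc_lt ha.1) (by omega)

lemma outflow_L : P.outflow x P.L = 0 := by
  apply Finset.sum_eq_zero
  intro a ha
  rw [Finset.mem_filter] at ha
  have := arc_lt ha.1
  have := arc_le ha.1
  omega

/-- Feasibility without the demand constraint (preserved when removing a path). -/
structure Feas (P : CBPP) (x : ℕ × ℕ × ℕ → ℝ) (z : ℝ) : Prop where
  nonneg : ∀ a ∈ P.arcs, 0 ≤ x a
  flow_source : P.inflow x 0 - P.outflow x 0 = -z
  flow_mid : ∀ j, 1 ≤ j → j ≤ P.L - 1 → P.inflow x j - P.outflow x j = 0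
  flow_sink : P.inflow x P.L - P.outflow x P.L = z
  color_alt : ∀ j, 1 ≤ j → j ≤ P.L - 1 → ∀ q ∈ Finset.Icc 1 P.Q,
    P.inflowC x j q ≤ P.outflowNotC x j q

lemma AFcaFeasible.toFeas (hf : P.AFcaFeasible x z) : Feas P x z :=
  ⟨hf.nonneg, hf.flow_source, hf.flow_mid, hf.flow_sink, hf.color_alt⟩

lemma conserve0 (hf : Feas P x 0) {j : ℕ} (hj : j ≤ P.L) :
    P.inflow x j = P.outflow x j := by
  have hL := P.hL
  rcases eq_or_ne j 0 with rfl | h0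
  · have := hf.flow_source; linarith
  rcases eq_or_ne j P.L with rfl | hL'
  · have := hf.flow_sink; linarith
  · have := hf.flow_mid j (by omega) (by omega); linarith

lemma single_le_outflow (hf : ∀ a ∈ P.arcs, 0 ≤ x a) {a : ℕ × ℕ × ℕ}
    (ha : a ∈ P.arcs) : x a ≤ P.outflow x a.1 := by
  apply Finset.single_le_sum (f := x)
  · intro b hb
    exact hf b (Finset.mem_filter.1 hb).1
  · exact Finset.mem_filter.2 ⟨ha, rfl⟩

/-- Base case: an `AF_ca`-feasible solution with `z = 0` is identically zero. -/
lemma zero_flow (hf : Feas P x 0) : ∀ a ∈ P.arcs, x a = 0 := by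
  have key : ∀ j, j ≤ P.L → P.inflow x j = 0 := by
    intro j
    induction j using Nat.strong_induction_on with
    | _ j ih =>
      intro hj
      apply Finset.sum_eq_zero
      intro a ha
      rw [Finset.mem_filter] at ha
      have h1 : a.1 < j := ha.2 ▸ arc_lt ha.1
      have h2 : x a ≤ P.outflow x a.1 := single_le_outflow hf.nonneg ha.1
      rw [← conserve0 hf (by omega), ih a.1 h1 (by omega)] at h2
      exact le_antisymm h2 (hf.nonneg a ha.1)
  intro a ha
  have h2 : x a ≤ P.outflow x a.1 := single_le_outflow hf.nonneg ha
  have h3 : a.1 ≤ P.L := le_of_lt (lt_of_lt_of_le (arc_lt ha) (arc_le ha))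
  rw [← conserve0 hf h3, key a.1 h3] at h2
  exact le_antisymm h2 (hf.nonneg a ha)

/-- Nonnegative-integrality of a real number. -/
def IsNatR (r : ℝ) : Prop := ∃ m : ℕ, r = m

lemma IsNatR.sum {α : Type*} {s : Finset α} {f : α → ℝ}
    (h : ∀ a ∈ s, IsNatR (f a)) : IsNatR (∑ a ∈ s, f a) := by
  classical
  choose g hg using fun a (ha : a ∈ s) => h a ha
  refine ⟨∑ a ∈ s.attach, g a a.2, ?_⟩
  rw [Nat.cast_sum, ← Finset.sum_attach s f]
  exact Finset.sum_congr rfl fun a _ => hg a a.2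

lemma IsNatR.add_one_le {r s : ℝ} (hr : IsNatR r) (hs : IsNatR s)
    (h : r < s) : r + 1 ≤ s := by
  obtain ⟨m, rfl⟩ := hr; obtain ⟨n, rfl⟩ := hs
  have : m < n := by exact_mod_cast h
  have : m + 1 ≤ n := this
  exact_mod_cast this

lemma IsNatR.one_le {r : ℝ} (hr : IsNatR r) (h : 0 < r) : 1 ≤ r := by
  obtain ⟨m, rfl⟩ := hr
  have : 0 < m := by exact_mod_cast h
  exact_mod_cast this

lemma outflow_split (j q : ℕ) :
    P.outflow x j = P.outflowC x j q + P.outflowNotC x j q := by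
  rw [outflow, outflowC, outflowNotC, ← Finset.sum_filter_add_sum_filter_not
    (P.arcs.filter (fun a => a.1 = j)) (fun a => a.2.2 = q) x,
    Finset.filter_filter, Finset.filter_filter]

lemma inflow_split {j : ℕ} (hj1 : 1 ≤ j) (hj2 : j ≤ P.L - 1) :
    P.inflow x j = ∑ q ∈ Finset.Icc 1 P.Q, P.inflowC x j q := by
  have hL := P.hL
  rw [inflow, ← Finset.sum_fiberwise_of_maps_to
    (g := fun a : ℕ × ℕ × ℕ => a.2.2) (t := Finset.Icc 1 P.Q) ?_ x]
  · apply Finset.sum_congr rfl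
    intro q hq
    rw [inflowC, Finset.filter_filter]
  · intro a ha
    rw [Finset.mem_filter] at ha
    exact arc_col_mem ha.1 (by omega)

lemma outflow_split_colors (j : ℕ) :
    P.outflow x j = ∑ q ∈ Finset.Icc 1 (P.Q + 1), P.outflowC x j q := by
  rw [outflow, ← Finset.sum_fiberwise_of_maps_to
    (g := fun a : ℕ × ℕ × ℕ => a.2.2) (t := Finset.Icc 1 (P.Q + 1)) ?_ x]
  · apply Finset.sum_congr rfl
    intro q hq
    rw [outflowC, Finset.filter_filter]
  · intro a ha
    exact arc_col_le (Finset.mem_filter.1 ha).1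


lemma IsNatR.add {r s : ℝ} (hr : IsNatR r) (hs : IsNatR s) : IsNatR (r + s) := by
  obtain ⟨m, rfl⟩ := hr; obtain ⟨n, rfl⟩ := hs
  exact ⟨m + n, by push_cast; ring⟩

lemma exists_pos_of_sum_pos {α : Type*} {s : Finset α} {f : α → ℝ}
    (hs : ∀ a ∈ s, 0 ≤ f a) (h : 0 < ∑ a ∈ s, f a) : ∃ a ∈ s, 0 < f a := by
  by_contra hc
  push_neg at hc
  have : ∑ a ∈ s, f a = 0 :=
    Finset.sum_eq_zero fun a ha => le_antisymm (hc a ha) (hs a ha)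
  linarith

section Junction

variable (hf : Feas P x z) (hint : ∀ a ∈ P.arcs, IsNatR (x a))

include hf hint

/-- The key combinatorial lemma: if at a middle vertex `j` there is inflow of color `q'`,
then one can choose an outgoing arc `b` of positive flow and different color such that all
other color-alternation constraints at `j` keep strict slack. -/
lemma junction {j q' : ℕ} (hj1 : 1 ≤ j) (hj2 : j ≤ P.L - 1)
    (hq' : q' ∈ Finset.Icc 1 P.Q) (hin : 1 ≤ P.inflowC x j q') :
    ∃ b ∈ P.arcs, b.1 = j ∧ b.2.2 ≠ q' ∧ 1 ≤ x b ∧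
      ∀ q ∈ Finset.Icc 1 P.Q, q ≠ q' → q ≠ b.2.2 →
        P.inflowC x j q + 1 ≤ P.outflowNotC x j q := by
  classical
  set T := P.inflow x j with hTdef
  have hT : T = P.outflow x j := by
    have := hf.flow_mid j hj1 hj2; linarith
  have hin_nonneg : ∀ q, 0 ≤ P.inflowC x j q := fun q =>
    Finset.sum_nonneg fun a ha => hf.nonneg a (Finset.mem_filter.1 ha).1
  have hout_nonneg : ∀ q, 0 ≤ P.outflowC x j q := fun q =>
    Finset.sum_nonneg fun a ha => hf.nonneg a (Finset.mem_filter.1 ha).1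
  have houtN_nonneg : ∀ q, 0 ≤ P.outflowNotC x j q := fun q =>
    Finset.sum_nonneg fun a ha => hf.nonneg a (Finset.mem_filter.1 ha).1
  have hin_nat : ∀ q, IsNatR (P.inflowC x j q) := fun q =>
    IsNatR.sum fun a ha => hint a (Finset.mem_filter.1 ha).1
  have hout_nat : ∀ q, IsNatR (P.outflowC x j q) := fun q =>
    IsNatR.sum fun a ha => hint a (Finset.mem_filter.1 ha).1
  have hT_nat : IsNatR T :=
    IsNatR.sum fun a ha => hint a (Finset.mem_filter.1 ha).1
  have hsplit : ∀ q, P.outflow x j = P.outflowC x j q + P.outflowNotC x j q :=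
    fun q => outflow_split j q
  have hconstr : ∀ q ∈ Finset.Icc 1 P.Q,
      P.inflowC x j q + P.outflowC x j q ≤ T := by
    intro q hq
    have h1 := hf.color_alt j hj1 hj2 q hq
    have h2 := hsplit q
    linarith
  have hinsum : ∑ q ∈ Finset.Icc 1 P.Q, P.inflowC x j q = T :=
    (inflow_split hj1 hj2).symm
  have houtsum : ∑ q ∈ Finset.Icc 1 (P.Q + 1), P.outflowC x j q = T := by
    rw [← outflow_split_colors j, hT]
  have inpair : ∀ q1 ∈ Finset.Icc 1 P.Q, ∀ q2 ∈ Finset.Icc 1 P.Q, q1 ≠ q2 →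
      P.inflowC x j q1 + P.inflowC x j q2 ≤ T := by
    intro q1 h1 q2 h2 hne
    have hsub : ({q1, q2} : Finset ℕ) ⊆ Finset.Icc 1 P.Q := by
      intro q hq
      simp only [Finset.mem_insert, Finset.mem_singleton] at hq
      rcases hq with rfl | rfl <;> assumption
    have := Finset.sum_le_sum_of_subset_of_nonneg hsub
      (fun q _ _ => hin_nonneg q)
    rw [Finset.sum_pair hne, hinsum] at this
    exact this
  have outpair : ∀ q1 ∈ Finset.Icc 1 P.Q, ∀ q2 ∈ Finset.Icc 1 P.Q, q1 ≠ q2 →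
      P.outflowC x j q1 + P.outflowC x j q2 ≤ T := by
    intro q1 h1 q2 h2 hne
    have hsub : ({q1, q2} : Finset ℕ) ⊆ Finset.Icc 1 (P.Q + 1) := by
      intro q hq
      simp only [Finset.mem_insert, Finset.mem_singleton] at hq
      rw [Finset.mem_Icc] at *
      rcases hq with rfl | rfl <;> omega
    have := Finset.sum_le_sum_of_subset_of_nonneg hsub
      (fun q _ _ => hout_nonneg q)
    rw [Finset.sum_pair hne, houtsum] at this
    exact this
  have intriple : ∀ q0 ∈ Finset.Icc 1 P.Q, ∀ q ∈ Finset.Icc 1 P.Q,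
      q0 ≠ q' → q ≠ q' → q0 ≠ q →
      P.inflowC x j q' + (P.inflowC x j q0 + P.inflowC x j q) ≤ T := by
    intro q0 h0 q hq h0' hq' hne
    have hsub : ({q', q0, q} : Finset ℕ) ⊆ Finset.Icc 1 P.Q := by
      intro r hr
      simp only [Finset.mem_insert, Finset.mem_singleton] at hr
      rcases hr with rfl | rfl | rfl <;> assumption
    have := Finset.sum_le_sum_of_subset_of_nonneg hsub
      (fun q _ _ => hin_nonneg q)
    rw [Finset.sum_insert (by simp [Ne.symm h0', Ne.symm hq']),
      Finset.sum_pair hne, hinsum] at this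
    exact this
  by_cases hA : ∃ q0 ∈ Finset.Icc 1 P.Q, q0 ≠ q' ∧
      P.inflowC x j q0 + P.outflowC x j q0 = T
  · obtain ⟨q0, hq0, hq0ne, htight⟩ := hA
    have hout0 : 0 < P.outflowC x j q0 := by
      have := inpair q0 hq0 q' hq' hq0ne
      linarith
    obtain ⟨b, hb, hbpos⟩ := exists_pos_of_sum_pos
      (fun a ha => hf.nonneg a (Finset.mem_filter.1 ha).1) hout0
    rw [Finset.mem_filter] at hb
    refine ⟨b, hb.1, hb.2.1, hb.2.2 ▸ hq0ne, (hint b hb.1).one_le hbpos, ?_⟩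
    intro q hq hqq' hqb
    rw [hb.2.2] at hqb
    have hne0 : q ≠ q0 := hqb
    have hstrict : P.inflowC x j q + P.outflowC x j q < T := by
      rcases lt_or_eq_of_le (hconstr q hq) with h | h
      · exact h
      · exfalso
        have hip := inpair q0 hq0 q hq (Ne.symm hne0)
        have hop := outpair q0 hq0 q hq (Ne.symm hne0)
        have hiT : P.inflowC x j q0 + P.inflowC x j q = T := by linarith
        have := intriple q0 hq0 q hq hq0ne hqq' (Ne.symm hne0)
        linarith
    have := ((hin_nat q).add (hout_nat q)).add_one_le hT_nat hstrict
    have h2 := hsplit q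
    linarith
  · push_neg at hA
    have hpos : 0 < P.outflowNotC x j q' := by
      have := hf.color_alt j hj1 hj2 q' hq'
      linarith
    obtain ⟨b, hb, hbpos⟩ := exists_pos_of_sum_pos
      (fun a ha => hf.nonneg a (Finset.mem_filter.1 ha).1) hpos
    rw [Finset.mem_filter] at hb
    refine ⟨b, hb.1, hb.2.1, hb.2.2, (hint b hb.1).one_le hbpos, ?_⟩
    intro q hq hqq' _
    have hne := hA q hq hqq'
    have hstrict : P.inflowC x j q + P.outflowC x j q < T :=
      lt_of_le_of_ne (hconstr q hq) hne
    have := ((hin_nat q).add (hout_nat q)).add_one_le hT_nat hstrict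
    have h2 := hsplit q
    linarith

end Junction


section Lists

abbrev Arc := ℕ × ℕ × ℕ

variable {R : Arc → Arc → Prop}

lemma getLastI_cons_cons (a b : Arc) (l : List Arc) :
    (a :: b :: l).getLastI = (b :: l).getLastI := by
  rw [List.getLastI_eq_getLast?, List.getLastI_eq_getLast?, List.getLast?_cons_cons]

lemma ml1 (hR : ∀ a b, R a b → a.2.1 = b.1) :
    ∀ {p : List Arc}, List.Chain' R p → (∀ a ∈ p, a.1 < a.2.1) →
    ∀ c ∈ p, p.headI.1 ≤ c.1 ∧ p.headI.1 < c.2.1 := by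
  intro p
  induction p with
  | nil => intro _ _ c hc; simp at hc
  | cons a t ih =>
    intro hchain hinc c hc
    rcases List.mem_cons.1 hc with rfl | hct
    · exact ⟨le_refl _, hinc c (by simp)⟩
    · have htne : t ≠ [] := List.ne_nil_of_mem hct
      obtain ⟨b, l, rfl⟩ := List.exists_cons_of_ne_nil htne
      have hab : R a b := (List.isChain_cons_cons.1 hchain).1
      have h1 : a.2.1 = b.1 := hR a b hab
      have h2 := ih hchain.tail (fun d hd => hinc d (List.mem_cons_of_mem _ hd)) c hct
      have h3 : a.1 < a.2.1 := hinc a (by simp)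
      simp only [List.headI] at h2 ⊢
      omega

lemma ml2 (hR : ∀ a b, R a b → a.2.1 = b.1) :
    ∀ {p : List Arc}, List.Chain' R p → (∀ a ∈ p, a.1 < a.2.1) →
    ∀ c ∈ p, c.2.1 ≤ p.getLastI.2.1 ∧ c.1 < p.getLastI.2.1 := by
  intro p
  induction p with
  | nil => intro _ _ c hc; simp at hc
  | cons a t ih =>
    intro hchain hinc c hc
    rcases eq_or_ne t [] with rfl | htne
    · rcases List.mem_cons.1 hc with rfl | hct
      · exact ⟨le_refl _, hinc c (by simp)⟩
      · simp at hct
    obtain ⟨b, l, rfl⟩ := List.exists_cons_of_ne_nil htne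
    have hlast : (a :: b :: l).getLastI = (b :: l).getLastI := getLastI_cons_cons a b l
    have hab : a.2.1 = b.1 := hR a b (List.isChain_cons_cons.1 hchain).1
    have hihb := ih hchain.tail (fun d hd => hinc d (List.mem_cons_of_mem _ hd)) b (by simp)
    rcases List.mem_cons.1 hc with rfl | hct
    · have h3 : c.1 < c.2.1 := hinc c (by simp)
      rw [hlast]
      omega
    · rw [hlast]
      exact ih hchain.tail (fun d hd => hinc d (List.mem_cons_of_mem _ hd)) c hct

lemma head_lt_last (hR : ∀ a b, R a b → a.2.1 = b.1) {p : List Arc}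
    (hne : p ≠ []) (hchain : List.Chain' R p) (hinc : ∀ a ∈ p, a.1 < a.2.1) :
    p.headI.1 < p.getLastI.2.1 := by
  obtain ⟨a, t, rfl⟩ := List.exists_cons_of_ne_nil hne
  exact (ml2 hR hchain hinc (a :: t).headI (by simp [List.headI])).2

lemma filterF1 (hR : ∀ a b, R a b → a.2.1 = b.1) {p : List Arc}
    (hne : p ≠ []) (hchain : List.Chain' R p) (hinc : ∀ a ∈ p, a.1 < a.2.1) :
    p.filter (fun a => a.1 = p.headI.1) = [p.headI] := by
  obtain ⟨a, t, rfl⟩ := List.exists_cons_of_ne_nil hne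
  simp only [List.headI, List.filter_cons, decide_eq_true_eq]
  rw [if_pos trivial]
  congr 1
  rw [List.filter_eq_nil_iff]
  intro c hc
  suffices ¬ (c.1 = a.1) from fun heq => this (of_decide_eq_true heq)
  have htne : t ≠ [] := List.ne_nil_of_mem hc
  obtain ⟨b, l, rfl⟩ := List.exists_cons_of_ne_nil htne
  have hab : a.2.1 = b.1 := hR a b (List.isChain_cons_cons.1 hchain).1
  have h4 := ml1 (p := b :: l) hR hchain.tail
    (fun d hd => hinc d (List.mem_cons_of_mem _ hd)) c hc
  have h3 : a.1 < a.2.1 := hinc a (by simp)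
  simp only [List.headI] at h4
  omega

lemma filterF2 (hR : ∀ a b, R a b → a.2.1 = b.1) {p : List Arc}
    (hchain : List.Chain' R p) (hinc : ∀ a ∈ p, a.1 < a.2.1) :
    p.filter (fun a => a.2.1 = p.headI.1) = [] := by
  rw [List.filter_eq_nil_iff]
  intro c hc
  simp only [decide_eq_true_eq]
  have := (ml1 hR hchain hinc c hc).2
  omega

lemma filterF3 (hR : ∀ a b, R a b → a.2.1 = b.1) :
    ∀ {p : List Arc}, p ≠ [] → List.Chain' R p → (∀ a ∈ p, a.1 < a.2.1) →
    p.filter (fun a => a.2.1 = p.getLastI.2.1) = [p.getLastI] := by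
  intro p
  induction p with
  | nil => intro h; exact absurd rfl h
  | cons a t ih =>
    intro _ hchain hinc
    rcases eq_or_ne t [] with rfl | htne
    · simp [List.getLastI]
    obtain ⟨b, l, rfl⟩ := List.exists_cons_of_ne_nil htne
    have hlast : (a :: b :: l).getLastI = (b :: l).getLastI := getLastI_cons_cons a b l
    rw [hlast]
    have hab : a.2.1 = b.1 := hR a b (List.isChain_cons_cons.1 hchain).1
    have hbl := ml2 (p := b :: l) hR hchain.tail
      (fun d hd => hinc d (List.mem_cons_of_mem _ hd)) b (by simp)
    rw [List.filter_cons]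
    have hne : ¬ (a.2.1 = (b :: l).getLastI.2.1) := by
      omega
    simp only [decide_eq_true_eq, if_neg hne]
    exact ih htne hchain.tail (fun d hd => hinc d (List.mem_cons_of_mem _ hd))

lemma filterF4 (hR : ∀ a b, R a b → a.2.1 = b.1) {p : List Arc}
    (hchain : List.Chain' R p) (hinc : ∀ a ∈ p, a.1 < a.2.1) :
    p.filter (fun a => a.1 = p.getLastI.2.1) = [] := by
  rw [List.filter_eq_nil_iff]
  intro c hc
  simp only [decide_eq_true_eq]
  have := (ml2 hR hchain hinc c hc).2
  omega

lemma filterF5 (hR : ∀ a b, R a b → a.2.1 = b.1) :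
    ∀ {p : List Arc}, p ≠ [] → List.Chain' R p → (∀ a ∈ p, a.1 < a.2.1) →
    ∀ j, j ≠ p.headI.1 → j ≠ p.getLastI.2.1 →
    (p.filter (fun a => a.2.1 = j) = [] ∧ p.filter (fun a => a.1 = j) = []) ∨
    (∃ c b, R c b ∧ c.2.1 = j ∧ b.1 = j ∧
      p.filter (fun a => a.2.1 = j) = [c] ∧ p.filter (fun a => a.1 = j) = [b]) := by
  intro p
  induction p with
  | nil => intro h; exact absurd rfl h
  | cons a t ih =>
    intro _ hchain hinc j hj1 hj2
    simp only [List.headI] at hj1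
    rcases eq_or_ne t [] with rfl | htne
    · left
      simp only [List.getLastI] at hj2
      constructor <;>
      · rw [List.filter_eq_nil_iff]
        intro c hc
        simp only [List.mem_singleton] at hc
        subst hc
        simp only [decide_eq_true_eq]
        omega
    obtain ⟨b, l, rfl⟩ := List.exists_cons_of_ne_nil htne
    have hlast : (a :: b :: l).getLastI = (b :: l).getLastI := getLastI_cons_cons a b l
    rw [hlast] at hj2
    have hab : a.2.1 = b.1 := hR a b (List.isChain_cons_cons.1 hchain).1
    have hinct : ∀ d ∈ b :: l, d.1 < d.2.1 := fun d hd => hinc d (List.mem_cons_of_mem _ hd)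
    rcases eq_or_ne j a.2.1 with rfl | hja2
    · -- j = a.2.1 : the adjacent pair is (a, b)
      right
      refine ⟨a, b, (List.isChain_cons_cons.1 hchain).1, rfl, hab.symm, ?_, ?_⟩
      · rw [List.filter_cons, if_pos (by simp)]
        congr 1
        have h5 := filterF2 (p := b :: l) hR hchain.tail hinct
        simp only [List.headI] at h5
        simp only [hab]
        exact h5
      · rw [List.filter_cons, if_neg (by simp only [decide_eq_true_eq]; have := hinc a (by simp); omega)]
        have h5 := filterF1 (p := b :: l) hR (by simp) hchain.tail hinct
        simp only [List.headI] at h5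
        simp only [hab]
        exact h5
    · -- j ≠ a.2.1 : recurse into the tail
      have hrec := ih htne hchain.tail hinct j (by simp only [List.headI]; omega) hj2
      have hfa1 : ¬ (decide (a.2.1 = j) = true) := by simp only [decide_eq_true_eq]; omega
      have hfa2 : ¬ (decide (a.1 = j) = true) := by simp only [decide_eq_true_eq]; omega
      rcases hrec with ⟨h1, h2⟩ | ⟨c, d, hcd, hc2, hd1, h1, h2⟩
      · left
        refine ⟨?_, ?_⟩
        · rw [List.filter_cons, if_neg hfa1]; exact h1
        · rw [List.filter_cons, if_neg hfa2]; exact h2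
      · right
        refine ⟨c, d, hcd, hc2, hd1, ?_, ?_⟩
        · rw [List.filter_cons, if_neg hfa1]; exact h1
        · rw [List.filter_cons, if_neg hfa2]; exact h2

lemma path_nodup {p : List Arc} (hchain : List.Chain' (fun a b : Arc => a.2.1 = b.1) p)
    (hinc : ∀ a ∈ p, a.1 < a.2.1) : p.Nodup := by
  have hfst : List.Chain' (fun m n : ℕ => m < n) (p.map (fun a => a.1)) := by
    unfold List.Chain' at hchain ⊢
    rw [List.isChain_map]
    induction p with
    | nil => simp
    | cons a t ih =>
      cases t with
      | nil => simp
      | cons b l =>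
        rw [List.isChain_cons_cons] at hchain ⊢
        refine ⟨?_, ih hchain.2 (fun d hd => hinc d (List.mem_cons_of_mem _ hd))⟩
        have := hinc a (by simp)
        have := hchain.1
        omega
  have hpw : List.Pairwise (· < ·) (p.map (fun a => a.1)) :=
    List.isChain_iff_pairwise.1 hfst
  have : (p.map (fun a => a.1)).Nodup := hpw.imp ne_of_lt
  exact this.of_map _

end Lists

/-- A good step of a path: consecutive arcs share an endpoint, have different colors, and
all other color constraints at the junction have strict slack. -/
def GoodStep (P : CBPP) (x : ℕ × ℕ × ℕ → ℝ) (a b : ℕ × ℕ × ℕ) : Prop :=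
  a.2.1 = b.1 ∧ a.2.2 ≠ b.2.2 ∧
    ∀ q ∈ Finset.Icc 1 P.Q, q ≠ a.2.2 → q ≠ b.2.2 →
      P.inflowC x a.2.1 q + 1 ≤ P.outflowNotC x a.2.1 q

lemma build (hf : Feas P x z) (hint : ∀ a ∈ P.arcs, IsNatR (x a)) :
    ∀ k : ℕ, ∀ a ∈ P.arcs, 1 ≤ x a → P.L - a.2.1 < k →
    ∃ p : List Arc, (∀ b ∈ a :: p, b ∈ P.arcs) ∧ (∀ b ∈ a :: p, 1 ≤ x b) ∧
      (a :: p).getLastI.2.1 = P.L ∧ List.Chain' (GoodStep P x) (a :: p) := by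
  intro k
  induction k with
  | zero => intro a _ _ h; omega
  | succ k ih =>
    intro a ha hxa hk
    rcases eq_or_ne a.2.1 P.L with hL | hL
    · refine ⟨[], ?_, ?_, by simp [List.getLastI_eq_getLast?, hL], by simp [List.Chain']⟩
      · intro b hb; simp only [List.mem_singleton] at hb; exact hb ▸ ha
      · intro b hb; simp only [List.mem_singleton] at hb; exact hb ▸ hxa
    · have h1 : a.2.1 < P.L := lt_of_le_of_ne (arc_le ha) hL
      have hj1 : 1 ≤ a.2.1 := by have := arc_lt ha; omega
      have hj2 : a.2.1 ≤ P.L - 1 := by omega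
      have hq' := arc_col_mem ha h1
      have hin : 1 ≤ P.inflowC x a.2.1 a.2.2 := by
        refine le_trans hxa (Finset.single_le_sum (f := x) ?_ ?_)
        · intro b hb; exact hf.nonneg b (Finset.mem_filter.1 hb).1
        · exact Finset.mem_filter.2 ⟨ha, rfl, rfl⟩
      obtain ⟨b, hb, hb1, hbne, hxb, hslack⟩ := junction hf hint hj1 hj2 hq' hin
      have hblt : a.2.1 < b.2.1 := by have := arc_lt hb; omega
      obtain ⟨p, hp1, hp2, hp3, hp4⟩ := ih b hb hxb (by omega)
      refine ⟨b :: p, ?_, ?_, ?_, ?_⟩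
      · intro c hc
        rcases List.mem_cons.1 hc with rfl | h
        · exact ha
        · exact hp1 c h
      · intro c hc
        rcases List.mem_cons.1 hc with rfl | h
        · exact hxa
        · exact hp2 c h
      · rw [getLastI_cons_cons]; exact hp3
      · unfold List.Chain'
        rw [List.isChain_cons_cons]
        refine ⟨⟨hb1.symm, fun h => hbne h.symm, ?_⟩, hp4⟩
        exact fun q hq hq1 hq2 => hslack q hq hq1 hq2

lemma extract_path (hf : Feas P x z) (hint : ∀ a ∈ P.arcs, IsNatR (x a))
    (hz : 1 ≤ z) :
    ∃ p : List Arc, p ≠ [] ∧ (∀ b ∈ p, b ∈ P.arcs) ∧ (∀ b ∈ p, 1 ≤ x b) ∧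
      p.headI.1 = 0 ∧ p.getLastI.2.1 = P.L ∧ List.Chain' (GoodStep P x) p := by
  have hout : 0 < P.outflow x 0 := by
    have h1 := hf.flow_source
    have h2 : P.inflow x 0 = 0 := inflow_zero
    linarith
  obtain ⟨a, ha, hpos⟩ := exists_pos_of_sum_pos
    (fun b hb => hf.nonneg b (Finset.mem_filter.1 hb).1) hout
  rw [Finset.mem_filter] at ha
  have hxa : 1 ≤ x a := (hint a ha.1).one_le hpos
  obtain ⟨p, h1, h2, h3, h4⟩ := build hf hint (P.L + 1) a ha.1 hxa (by omega)
  exact ⟨a :: p, by simp, h1, h2, ha.2, h3, h4⟩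


section Removal

variable {p : List Arc}

lemma sum_indicator_filter {pred : ℕ × ℕ × ℕ → Prop} [DecidablePred pred]
    (hnd : p.Nodup) (hsub : ∀ a ∈ p, a ∈ P.arcs) :
    ∑ a ∈ P.arcs.filter pred, (if a ∈ p then (1:ℝ) else 0) =
      ((p.filter (fun a => pred a)).length : ℝ) := by
  classical
  rw [← Finset.sum_filter, Finset.sum_const, nsmul_eq_mul, mul_one]
  congr 1
  have heq : (P.arcs.filter pred).filter (fun a => a ∈ p) =
      (p.filter (fun a => pred a)).toFinset := by
    ext a
    simp only [Finset.mem_filter, List.mem_toFinset, List.mem_filter, decide_eq_true_eq]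
    constructor
    · rintro ⟨⟨-, h2⟩, h3⟩; exact ⟨h3, h2⟩
    · rintro ⟨h1, h2⟩; exact ⟨⟨hsub a h1, h2⟩, h1⟩
  rw [heq, List.toFinset_card_of_nodup (hnd.filter _)]

lemma sum_sub {pred : ℕ × ℕ × ℕ → Prop} [DecidablePred pred]
    (hnd : p.Nodup) (hsub : ∀ a ∈ p, a ∈ P.arcs) :
    ∑ a ∈ P.arcs.filter pred, (x a - if a ∈ p then (1:ℝ) else 0)
      = (∑ a ∈ P.arcs.filter pred, x a) - ((p.filter (fun a => pred a)).length : ℝ) := by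
  rw [Finset.sum_sub_distrib, sum_indicator_filter hnd hsub]

lemma inflow_sub (hnd : p.Nodup) (hsub : ∀ a ∈ p, a ∈ P.arcs) (j : ℕ) :
    P.inflow (fun a => x a - if a ∈ p then 1 else 0) j
      = P.inflow x j - ((p.filter (fun a => a.2.1 = j)).length : ℝ) := by
  simp only [inflow]
  exact sum_sub hnd hsub

lemma outflow_sub (hnd : p.Nodup) (hsub : ∀ a ∈ p, a ∈ P.arcs) (j : ℕ) :
    P.outflow (fun a => x a - if a ∈ p then 1 else 0) j
      = P.outflow x j - ((p.filter (fun a => a.1 = j)).length : ℝ) := by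
  simp only [outflow]
  exact sum_sub hnd hsub

lemma inflowC_sub (hnd : p.Nodup) (hsub : ∀ a ∈ p, a ∈ P.arcs) (j q : ℕ) :
    P.inflowC (fun a => x a - if a ∈ p then 1 else 0) j q
      = P.inflowC x j q - ((p.filter (fun a => a.2.1 = j ∧ a.2.2 = q)).length : ℝ) := by
  simp only [inflowC]
  exact sum_sub hnd hsub

lemma outflowNotC_sub (hnd : p.Nodup) (hsub : ∀ a ∈ p, a ∈ P.arcs) (j q : ℕ) :
    P.outflowNotC (fun a => x a - if a ∈ p then 1 else 0) j q
      = P.outflowNotC x j q - ((p.filter (fun a => a.1 = j ∧ a.2.2 ≠ q)).length : ℝ) := by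
  simp only [outflowNotC]
  exact sum_sub hnd hsub

lemma filter_conj_single {f g : Arc → Prop} [DecidablePred f] [DecidablePred g]
    {c : Arc} (h : p.filter (fun a => f a) = [c]) :
    p.filter (fun a => f a ∧ g a) = if g c then [c] else [] := by
  have h2 : p.filter (fun a => f a ∧ g a) =
      (p.filter (fun a => f a)).filter (fun a => g a) := by
    rw [List.filter_filter]
    apply List.filter_congr
    intro a _
    by_cases h1 : f a <;> by_cases h3 : g a <;> simp [h1, h3]
  rw [h2, h]
  by_cases hg : g c <;> simp [hg, List.filter]

lemma filter_conj_nil {f g : Arc → Prop} [DecidablePred f] [DecidablePred g]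
    (h : p.filter (fun a => f a) = []) :
    p.filter (fun a => f a ∧ g a) = [] := by
  rw [List.filter_eq_nil_iff] at h ⊢
  intro a ha
  simp only [decide_eq_true_eq] at h ⊢
  exact fun hc => h a ha hc.1

/-- Removing one unit of flow along a good path preserves feasibility. -/
lemma removed_feas (hf : Feas P x z) (hpne : p ≠ [])
    (hmem : ∀ b ∈ p, b ∈ P.arcs) (hx1 : ∀ b ∈ p, 1 ≤ x b)
    (hhead : p.headI.1 = 0) (hlast : p.getLastI.2.1 = P.L)
    (hchain : List.Chain' (GoodStep P x) p) :
    Feas P (fun a => x a - if a ∈ p then 1 else 0) (z - 1) := by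
  have hL := P.hL
  have hR : ∀ a b : Arc, GoodStep P x a b → a.2.1 = b.1 := fun a b h => h.1
  have hinc : ∀ a ∈ p, a.1 < a.2.1 := fun a h => arc_lt (hmem a h)
  have hchain0 : List.Chain' (fun a b : Arc => a.2.1 = b.1) p := hchain.imp hR
  have hnd : p.Nodup := path_nodup hchain0 hinc
  have hcnt_in0 : p.filter (fun a => a.2.1 = 0) = [] := by
    have h := filterF2 hR hchain hinc
    rw [hhead] at h
    exact h
  have hcnt_out0 : p.filter (fun a => a.1 = 0) = [p.headI] := by
    have h := filterF1 hR hpne hchain hinc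
    rw [hhead] at h
    exact h
  have hcnt_inL : p.filter (fun a => a.2.1 = P.L) = [p.getLastI] := by
    have h := filterF3 hR hpne hchain hinc
    rw [hlast] at h
    exact h
  have hcnt_outL : p.filter (fun a => a.1 = P.L) = [] := by
    have h := filterF4 hR hchain hinc
    rw [hlast] at h
    exact h
  refine ⟨?_, ?_, ?_, ?_, ?_⟩
  · -- nonneg
    intro a ha
    by_cases hap : a ∈ p
    · have := hx1 a hap
      simp only [if_pos hap]
      linarith
    · have := hf.nonneg a ha
      simp only [if_neg hap]
      linarith
  · -- flow_source
    rw [inflow_sub hnd hmem, outflow_sub hnd hmem, hcnt_in0, hcnt_out0]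
    have := hf.flow_source
    simp only [List.length_singleton, List.length_nil]
    push_cast
    linarith
  · -- flow_mid
    intro j hj1 hj2
    rw [inflow_sub hnd hmem, outflow_sub hnd hmem]
    have hmid := hf.flow_mid j hj1 hj2
    have hjh : j ≠ p.headI.1 := by omega
    have hjl : j ≠ p.getLastI.2.1 := by rw [hlast]; omega
    rcases filterF5 hR hpne hchain hinc j hjh hjl with ⟨h1, h2⟩ | ⟨c, b, hcb, hc2, hb1, h1, h2⟩
    · rw [h1, h2]; simp; linarith
    · rw [h1, h2]; simp; linarith
  · -- flow_sink
    rw [inflow_sub hnd hmem, outflow_sub hnd hmem, hcnt_inL, hcnt_outL]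
    have := hf.flow_sink
    simp only [List.length_singleton, List.length_nil]
    push_cast
    linarith
  · -- color_alt
    intro j hj1 hj2 q hq
    rw [inflowC_sub hnd hmem, outflowNotC_sub hnd hmem]
    have halt := hf.color_alt j hj1 hj2 q hq
    have hjh : j ≠ p.headI.1 := by omega
    have hjl : j ≠ p.getLastI.2.1 := by rw [hlast]; omega
    rcases filterF5 hR hpne hchain hinc j hjh hjl with ⟨h1, h2⟩ | ⟨c, b, hcb, hc2, hb1, h1, h2⟩
    · rw [filter_conj_nil h1, filter_conj_nil h2]
      simp
      linarith
    · rw [filter_conj_single (g := fun a => a.2.2 = q) h1,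
        filter_conj_single (g := fun a => a.2.2 ≠ q) h2]
      obtain ⟨hcb1, hcb2, hcb3⟩ := hcb
      rcases eq_or_ne c.2.2 q with hcq | hcq
      · -- path enters j with color q, leaves with a different color
        have hbq : b.2.2 ≠ q := fun h => hcb2 (hcq.trans h.symm)
        rw [if_pos hcq, if_pos hbq]
        simp
        linarith
      · rcases eq_or_ne b.2.2 q with hbq | hbq
        · rw [if_neg hcq, if_neg (by simp [hbq])]
          simp
          linarith
        · rw [if_neg hcq, if_pos hbq]
          have := hcb3 q hq (fun h => hcq h.symm) (fun h => hbq h.symm)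
          rw [hc2] at this
          simp
          linarith

end Removal


/-- Main decomposition lemma, by induction on the integer value of `z`. -/
lemma decomp : ∀ m : ℕ, ∀ x : ℕ × ℕ × ℕ → ℝ, Feas P x (m : ℝ) →
    (∀ a ∈ P.arcs, IsNatR (x a)) →
    ∃ (t : ℕ) (d : Fin t → ℕ) (paths : Fin t → List (ℕ × ℕ × ℕ)),
      (∀ s, 0 < d s) ∧ (∀ s, P.IsCAPath (paths s)) ∧
      (∑ s : Fin t, (d s : ℝ)) = (m : ℝ) ∧
      (∀ a ∈ P.arcs,
        (∑ s ∈ Finset.univ.filter (fun s => a ∈ paths s), (d s : ℝ)) = x a) := by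
  intro m
  induction m with
  | zero =>
    intro x hf _
    have hf0 : Feas P x 0 := by simpa using hf
    refine ⟨0, Fin.elim0, Fin.elim0, fun s => s.elim0, fun s => s.elim0, by simp, ?_⟩
    intro a ha
    rw [zero_flow hf0 a ha]
    simp
  | succ m ih =>
    intro x hf hint
    have h1z : (1 : ℝ) ≤ ((m + 1 : ℕ) : ℝ) := by
      have : (1 : ℕ) ≤ m + 1 := by omega
      exact_mod_cast this
    obtain ⟨p, hpne, hmem, hx1, hhead, hlast, hchain⟩ := extract_path hf hint h1z
    set x' : ℕ × ℕ × ℕ → ℝ := fun a => x a - if a ∈ p then 1 else 0 with hx'def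
    have hf' : Feas P x' ((m : ℕ) : ℝ) := by
      have h := removed_feas hf hpne hmem hx1 hhead hlast hchain
      have heq : ((m + 1 : ℕ) : ℝ) - 1 = ((m : ℕ) : ℝ) := by push_cast; ring
      rwa [heq] at h
    have hint' : ∀ a ∈ P.arcs, IsNatR (x' a) := by
      intro a ha
      obtain ⟨k, hk⟩ := hint a ha
      by_cases hap : a ∈ p
      · have h1 : 1 ≤ x a := hx1 a hap
        have hk1 : 1 ≤ k := by rw [hk] at h1; exact_mod_cast h1
        refine ⟨k - 1, ?_⟩
        simp only [hx'def, if_pos hap, hk]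
        rw [Nat.cast_sub hk1]
        norm_num
      · exact ⟨k, by simp only [hx'def, if_neg hap, hk]; ring⟩
    obtain ⟨t, d, paths, hd, hpaths, hsum, harc⟩ := ih x' hf' hint'
    refine ⟨t + 1, Fin.cons 1 d, Fin.cons p paths, ?_, ?_, ?_, ?_⟩
    · intro s
      refine Fin.cases ?_ ?_ s
      · simp
      · intro i; simpa using hd i
    · intro s
      refine Fin.cases ?_ ?_ s
      · refine ⟨hpne, hmem, hhead, hlast, ?_⟩
        exact hchain.imp (fun a b h => ⟨h.1, h.2.1⟩)
      · intro i; simpa using hpaths i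
    · rw [Fin.sum_univ_succ]
      simp only [Fin.cons_zero, Fin.cons_succ, Nat.cast_one]
      rw [hsum]
      push_cast
      ring
    · intro a ha
      have hthis := harc a ha
      rw [Finset.sum_filter] at hthis ⊢
      rw [Fin.sum_univ_succ]
      simp only [Fin.cons_zero, Fin.cons_succ]
      have hval : x' a = x a - (if a ∈ p then (1:ℝ) else 0) := rfl
      rw [hthis, hval]
      by_cases hap : a ∈ p <;> simp [hap]

end CBPP

/-- Any integer AF_ca-feasible solution decomposes into finitely many color-alternating
paths `P_1, …, P_t` from `0` to `L` with positive integer multiplicities `d_1, …, d_t` such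
that `d_1 + ⋯ + d_t = z` and, for every arc `a`, the total multiplicity of the paths using
`a` equals `x_a`. -/
theorem stmt_8 (P : CBPP) (x : ℕ × ℕ × ℕ → ℝ) (z : ℝ) (hfeas : P.AFcaFeasible x z)
    (hxint : ∀ a ∈ P.arcs, ∃ m : ℕ, x a = m) (hzint : ∃ m : ℕ, z = m) :
    ∃ (t : ℕ) (d : Fin t → ℕ) (paths : Fin t → List (ℕ × ℕ × ℕ)),
      (∀ s, 0 < d s) ∧ (∀ s, P.IsCAPath (paths s)) ∧
      (∑ s : Fin t, (d s : ℝ)) = z ∧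
      (∀ a ∈ P.arcs,
        (∑ s ∈ Finset.univ.filter (fun s => a ∈ paths s), (d s : ℝ)) = x a) := by
  obtain ⟨m, rfl⟩ := hzint
  exact CBPP.decomp m x hfeas.toFeas hxint
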